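/- Let 0 < H < 1 and let m ≥ 1 be an integer. Then the double integral ∫₀¹∫₀¹ R_H(u,v)^{2m} (uv)^{−H(2m+1)} du dv is finite, and n^{−2} Σ_{1≤i,j≤n−1} R_H(i/n, j/n)^{2m} (i/n)^{−H(2m+1)} (j/n)^{−H(2m+1)} converges to this integral as n → ∞. -/

import Mathlib

/-!
For `0 ≤ H ≤ 1` the map `t ↦ t ^ H` is subadditive, hence `|x^H - y^H| ≤ |x - y|^H ≤ x^H + y^H`,
and squaring gives `|R_H(x,y)| ≤ x^H y^H`. So the integrand is bounded by `x^{-H} y^{-H}`, which is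
integrable on `(0,1]²` because `H < 1`. The Riemann sum is the integral of the step function that
takes on each cell the value at its upper right corner; since the bound decreases in each variable
it dominates these step functions too, they converge to the integrand on the open square by
continuity, and dominated convergence applies.
-/

open MeasureTheory Filter Topology Real

/-- Covariance function of fractional Brownian motion with Hurst parameter `H`. -/
noncomputable def RH (H t s : ℝ) : ℝ :=
  (t ^ (2 * H) + s ^ (2 * H) - |t - s| ^ (2 * H)) / 2

open Set

section CovarianceBound

variable {H x y : ℝ}

lemma abs_rpow_sub_rpow_le_abs_sub_rpow (hH0 : 0 ≤ H) (hH1 : H ≤ 1) (hx : 0 ≤ x) (hy : 0 ≤ y) :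
    |x ^ H - y ^ H| ≤ |x - y| ^ H := by
  wlog hyx : y ≤ x generalizing x y
  · rw [abs_sub_comm, abs_sub_comm x]
    exact this hy hx (le_of_not_ge hyx)
  have hsub : x ^ H ≤ (x - y) ^ H + y ^ H := by
    simpa using Real.rpow_add_le_add_rpow (sub_nonneg.2 hyx) hy hH0 hH1
  rw [abs_of_nonneg (sub_nonneg.2 (Real.rpow_le_rpow hy hyx hH0)),
    abs_of_nonneg (sub_nonneg.2 hyx)]
  linarith

lemma abs_RH_le (hH0 : 0 ≤ H) (hH1 : H ≤ 1) (hx : 0 ≤ x) (hy : 0 ≤ y) :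
    |RH H x y| ≤ x ^ H * y ^ H := by
  have hsq : ∀ {t : ℝ}, 0 ≤ t → t ^ (2 * H) = (t ^ H) ^ 2 := fun ht => by
    rw [mul_comm, ← Real.rpow_mul_natCast ht]; norm_num
  have hlow := abs_le.1 (abs_rpow_sub_rpow_le_abs_sub_rpow hH0 hH1 hx hy)
  have hupp : |x - y| ^ H ≤ x ^ H + y ^ H :=
    (Real.rpow_le_rpow (abs_nonneg _) (abs_sub_le_iff.2 ⟨by linarith, by linarith⟩) hH0).trans
      (Real.rpow_add_le_add_rpow hx hy hH0 hH1)
  have h₁ := sq_le_sq' hlow.1 hlow.2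
  have h₂ := pow_le_pow_left₀ (Real.rpow_nonneg (abs_nonneg (x - y)) H) hupp 2
  rw [RH, hsq hx, hsq hy, hsq (abs_nonneg _), abs_le]
  constructor <;> nlinarith

lemma abs_RH_pow_mul_rpow_le (hH0 : 0 ≤ H) (hH1 : H ≤ 1) (k : ℕ) {a b : ℝ} (ha : 0 < a)
    (hax : a ≤ x) (hb : 0 < b) (hby : b ≤ y) :
    |RH H x y ^ k * (x * y) ^ (-(H * (k + 1)))| ≤ a ^ (-H) * b ^ (-H) := by
  have hx : 0 < x := ha.trans_le hax
  have hy : 0 < y := hb.trans_le hby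
  have hxy : 0 < x * y := mul_pos hx hy
  calc |RH H x y ^ k * (x * y) ^ (-(H * (k + 1)))|
      = |RH H x y| ^ k * (x * y) ^ (-(H * (k + 1))) := by
        rw [abs_mul, abs_pow, abs_of_pos (Real.rpow_pos_of_pos hxy _)]
    _ ≤ ((x * y) ^ H) ^ k * (x * y) ^ (-(H * (k + 1))) := by
        gcongr
        rw [Real.mul_rpow hx.le hy.le]
        exact abs_RH_le hH0 hH1 hx.le hy.le
    _ = x ^ (-H) * y ^ (-H) := by
        rw [← Real.rpow_mul_natCast hxy.le, ← Real.rpow_add hxy, ← Real.mul_rpow hx.le hy.le]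
        ring_nf
    _ ≤ a ^ (-H) * b ^ (-H) := by
        have hH : -H ≤ 0 := neg_nonpos.2 hH0
        gcongr ?_ * ?_
        · exact Real.rpow_le_rpow_of_nonpos ha hax hH
        · exact Real.rpow_le_rpow_of_nonpos hb hby hH

lemma continuous_RH (hH : 0 < H) : Continuous fun p : ℝ × ℝ => RH H p.1 p.2 := by
  have h2H : 0 ≤ 2 * H := by linarith
  unfold RH
  fun_prop (disch := exact Or.inr h2H)

end CovarianceBound

lemma integrableOn_rpow_neg_mul_rpow_neg {H : ℝ} (hH : H < 1) :
    IntegrableOn (fun p : ℝ × ℝ => p.1 ^ (-H) * p.2 ^ (-H)) (Ioc 0 1 ×ˢ Ioc 0 1) := by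
  have h : IntegrableOn (fun x : ℝ => x ^ (-H)) (Ioc 0 1) :=
    (intervalIntegrable_iff_integrableOn_Ioc_of_le zero_le_one).1
      (intervalIntegral.intervalIntegrable_rpow' (by linarith))
  rw [IntegrableOn, Measure.volume_eq_prod, ← Measure.prod_restrict]
  exact h.mul_prod h

section RiemannSum

lemma natCast_div_mem_Ioc {k n : ℕ} (hk : k ∈ Finset.Ico 1 n) : (k / n : ℝ) ∈ Ioc 0 1 := by
  obtain ⟨hk1, hkn⟩ := Finset.mem_Ico.1 hk
  have hn : (0 : ℝ) < n := by exact_mod_cast Nat.zero_lt_of_lt hkn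
  exact ⟨div_pos (by exact_mod_cast hk1) hn, (div_le_one hn).2 (by exact_mod_cast hkn.le)⟩

lemma eventually_ceil_mul_mem_Ico {u : ℝ} (hu0 : 0 < u) (hu1 : u < 1) :
    ∀ᶠ n : ℕ in atTop, ⌈u * n⌉₊ ∈ Finset.Ico 1 n := by
  have hlarge : ∀ᶠ n : ℕ in atTop, 1 ≤ (n : ℝ) * (1 - u) :=
    (tendsto_natCast_atTop_atTop.atTop_mul_const (sub_pos.2 hu1)).eventually_ge_atTop 1
  filter_upwards [hlarge, eventually_gt_atTop 0] with n hn hn0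
  refine Finset.mem_Ico.2 ⟨Nat.one_le_ceil_iff.2 (mul_pos hu0 (Nat.cast_pos.2 hn0)), ?_⟩
  have : (⌈u * n⌉₊ : ℝ) < n :=
    (Nat.ceil_lt_add_one (mul_nonneg hu0.le n.cast_nonneg)).trans_le (by linarith)
  exact_mod_cast this

def gridCell (n i : ℕ) : Set ℝ := Ioc ((i - 1 : ℝ) / n) (i / n)

lemma mem_gridCell_iff {n i : ℕ} (hn : 0 < n) (hi : 0 < i) {u : ℝ} :
    u ∈ gridCell n i ↔ ⌈u * n⌉₊ = i := by
  have hn' : (0 : ℝ) < n := Nat.cast_pos.2 hn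
  rw [gridCell, mem_Ioc, Nat.ceil_eq_iff hi.ne', Nat.cast_pred hi, div_lt_iff₀ hn', le_div_iff₀ hn']

lemma measurableSet_gridCell {n i : ℕ} : MeasurableSet (gridCell n i) := measurableSet_Ioc

lemma gridCell_subset_Ioc {n i : ℕ} (hi : i ∈ Finset.Ico 1 n) : gridCell n i ⊆ Ioc 0 1 :=
  Ioc_subset_Ioc (div_nonneg (sub_nonneg.2 (by exact_mod_cast (Finset.mem_Ico.1 hi).1))
    n.cast_nonneg) (natCast_div_mem_Ioc hi).2

lemma volume_gridCell (n i : ℕ) : volume (gridCell n i) = ENNReal.ofReal (n : ℝ)⁻¹ := by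
  rw [gridCell, Real.volume_Ioc]
  ring_nf

noncomputable def gridStep (f : ℝ × ℝ → ℝ) (n : ℕ) (p : ℝ × ℝ) : ℝ :=
  ∑ i ∈ Finset.Ico 1 n, ∑ j ∈ Finset.Ico 1 n,
    (gridCell n i ×ˢ gridCell n j).indicator (fun _ => f (i / n, j / n)) p

lemma gridStep_apply (f : ℝ × ℝ → ℝ) (n : ℕ) (p : ℝ × ℝ) :
    gridStep f n p =
      if ⌈p.1 * n⌉₊ ∈ Finset.Ico 1 n ∧ ⌈p.2 * n⌉₊ ∈ Finset.Ico 1 n then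
        f (⌈p.1 * n⌉₊ / n, ⌈p.2 * n⌉₊ / n) else 0 := by
  have hcell : ∀ i ∈ Finset.Ico 1 n, ∀ j ∈ Finset.Ico 1 n,
      (gridCell n i ×ˢ gridCell n j).indicator (fun _ => f (i / n, j / n)) p =
        if ⌈p.1 * n⌉₊ = i then if ⌈p.2 * n⌉₊ = j then f (i / n, j / n) else 0 else 0 := by
    classical
    intro i hi j hj
    have hn : 0 < n := Nat.zero_lt_of_lt (Finset.mem_Ico.1 hi).2
    simp only [indicator_apply, mem_prod, mem_gridCell_iff hn (Finset.mem_Ico.1 hi).1,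
      mem_gridCell_iff hn (Finset.mem_Ico.1 hj).1, ite_and]
  rw [gridStep, Finset.sum_congr rfl fun i hi => Finset.sum_congr rfl (hcell i hi)]
  simp only [Finset.sum_ite_irrel, Finset.sum_const_zero, Finset.sum_ite_eq, ite_and]

lemma measurable_gridStep (f : ℝ × ℝ → ℝ) (n : ℕ) : Measurable (gridStep f n) :=
  Finset.measurable_sum _ fun _ _ => Finset.measurable_sum _ fun _ _ =>
    measurable_const.indicator (measurableSet_gridCell.prod measurableSet_gridCell)

lemma integral_gridStep (f : ℝ × ℝ → ℝ) (n : ℕ) :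
    ∫ p in Ioc 0 1 ×ˢ Ioc 0 1, gridStep f n p =
      ((n : ℝ) ^ 2)⁻¹ * ∑ i ∈ Finset.Ico 1 n, ∑ j ∈ Finset.Ico 1 n, f (i / n, j / n) := by
  set ν := volume.restrict (Ioc (0 : ℝ) 1)
  have hcell : ∀ i ∈ Finset.Ico 1 n, ν.real (gridCell n i) = (n : ℝ)⁻¹ := by
    intro i hi
    rw [measureReal_restrict_apply measurableSet_gridCell, inter_eq_left.2 (gridCell_subset_Ioc hi),
      measureReal_def, volume_gridCell, ENNReal.toReal_ofReal (by positivity)]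
  have hmeas : ∀ i j, MeasurableSet (gridCell n i ×ˢ gridCell n j) :=
    fun _ _ => measurableSet_gridCell.prod measurableSet_gridCell
  have hterm : ∀ i ∈ Finset.Ico 1 n, ∀ j ∈ Finset.Ico 1 n,
      ∫ p, (gridCell n i ×ˢ gridCell n j).indicator (fun _ => f (i / n, j / n)) p ∂ν.prod ν =
        ((n : ℝ) ^ 2)⁻¹ * f (i / n, j / n) := by
    intro i hi j hj
    rw [integral_indicator_const _ (hmeas i j), measureReal_prod_prod, hcell i hi, hcell j hj,
      smul_eq_mul]
    ring
  unfold gridStep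
  rw [Measure.volume_eq_prod, ← Measure.prod_restrict, integral_finsetSum _
    fun i _ => integrable_finsetSum _ fun j _ => (integrable_const _).indicator (hmeas i j),
    Finset.mul_sum]
  refine Finset.sum_congr rfl fun i hi => ?_
  rw [integral_finsetSum _ fun j _ => (integrable_const _).indicator (hmeas i j), Finset.mul_sum]
  exact Finset.sum_congr rfl (hterm i hi)

variable {f g : ℝ × ℝ → ℝ}

lemma tendsto_gridStep (hf : ContinuousOn f (Ioo 0 1 ×ˢ Ioo 0 1)) {p : ℝ × ℝ}
    (hp : p ∈ Ioo 0 1 ×ˢ Ioo 0 1) : Tendsto (fun n => gridStep f n p) atTop (𝓝 (f p)) := by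
  have hcorner : Tendsto (fun n : ℕ => ((⌈p.1 * n⌉₊ / n : ℝ), (⌈p.2 * n⌉₊ / n : ℝ))) atTop (𝓝 p) :=
    ((tendsto_nat_ceil_mul_div_atTop hp.1.1.le).comp tendsto_natCast_atTop_atTop).prodMk_nhds
      ((tendsto_nat_ceil_mul_div_atTop hp.2.1.le).comp tendsto_natCast_atTop_atTop)
  refine ((hf.continuousAt ((isOpen_Ioo.prod isOpen_Ioo).mem_nhds hp)).tendsto.comp
    hcorner).congr' ?_
  filter_upwards [eventually_ceil_mul_mem_Ico hp.1.1 hp.1.2,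
    eventually_ceil_mul_mem_Ico hp.2.1 hp.2.2] with n h₁ h₂
  rw [gridStep_apply, if_pos ⟨h₁, h₂⟩]
  rfl

lemma abs_gridStep_le
    (hdom : ∀ p ∈ Ioc 0 1 ×ˢ Ioc 0 1, ∀ q ∈ Ioc 0 1 ×ˢ Ioc 0 1, p ≤ q → |f q| ≤ g p)
    (n : ℕ) {p : ℝ × ℝ} (hp : p ∈ Ioc 0 1 ×ˢ Ioc 0 1) : |gridStep f n p| ≤ g p := by
  have hle : ∀ {u : ℝ}, ⌈u * n⌉₊ ∈ Finset.Ico 1 n → u ≤ ⌈u * n⌉₊ / n := fun hu =>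
    (le_div_iff₀ (by exact_mod_cast Nat.zero_lt_of_lt (Finset.mem_Ico.1 hu).2)).2
      (Nat.le_ceil _)
  rw [gridStep_apply]
  split_ifs with h
  · exact hdom p hp _ ⟨natCast_div_mem_Ioc h.1, natCast_div_mem_Ioc h.2⟩ ⟨hle h.1, hle h.2⟩
  · simpa using (abs_nonneg _).trans (hdom p hp p hp le_rfl)

theorem tendsto_riemannSum_unitSquare (hf : Measurable f)
    (hfc : ContinuousOn f (Ioo 0 1 ×ˢ Ioo 0 1)) (hg : IntegrableOn g (Ioc 0 1 ×ˢ Ioc 0 1))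
    (hdom : ∀ p ∈ Ioc 0 1 ×ˢ Ioc 0 1, ∀ q ∈ Ioc 0 1 ×ˢ Ioc 0 1, p ≤ q → |f q| ≤ g p) :
    IntegrableOn f (Ioc 0 1 ×ˢ Ioc 0 1) ∧
      Tendsto (fun n : ℕ => ((n : ℝ) ^ 2)⁻¹ *
          ∑ i ∈ Finset.Ico 1 n, ∑ j ∈ Finset.Ico 1 n, f (i / n, j / n))
        atTop (𝓝 (∫ p in Ioc 0 1 ×ˢ Ioc 0 1, f p)) := by
  have hbox : MeasurableSet (Ioc (0 : ℝ) 1 ×ˢ Ioc (0 : ℝ) 1) :=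
    measurableSet_Ioc.prod measurableSet_Ioc
  have hopen : ∀ᵐ p ∂volume.restrict (Ioc (0 : ℝ) 1 ×ˢ Ioc (0 : ℝ) 1),
      p ∈ Ioo 0 1 ×ˢ Ioo 0 1 := by
    rw [← Measure.restrict_congr_set (Measure.volume_eq_prod ℝ ℝ ▸
      Measure.set_prod_ae_eq Ioo_ae_eq_Ioc Ioo_ae_eq_Ioc)]
    exact ae_restrict_mem (measurableSet_Ioo.prod measurableSet_Ioo)
  refine ⟨hg.mono' hf.aestronglyMeasurable
    (ae_restrict_of_forall_mem hbox fun p hp => hdom p hp p hp le_rfl), ?_⟩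
  simp_rw [← integral_gridStep]
  exact tendsto_integral_of_dominated_convergence g
    (fun n => (measurable_gridStep f n).aestronglyMeasurable) hg
    (fun n => ae_restrict_of_forall_mem hbox fun p hp => abs_gridStep_le hdom n hp)
    (hopen.mono fun p hp => tendsto_gridStep hfc hp)

end RiemannSum

theorem statement14_general (H : ℝ) (hH : 0 < H) (hH' : H < 1) (m : ℕ) :
    IntegrableOn
      (fun p : ℝ × ℝ =>
        RH H p.1 p.2 ^ (2 * m) * (p.1 * p.2) ^ (-(H * (2 * (m : ℝ) + 1))))
      (Set.Ioc 0 1 ×ˢ Set.Ioc 0 1) ∧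
    Tendsto (fun n : ℕ =>
        ((n : ℝ) ^ 2)⁻¹ *
          ∑ i ∈ Finset.Ico 1 n, ∑ j ∈ Finset.Ico 1 n,
            RH H ((i : ℝ) / n) ((j : ℝ) / n) ^ (2 * m) *
              ((i : ℝ) / n) ^ (-(H * (2 * (m : ℝ) + 1))) *
              ((j : ℝ) / n) ^ (-(H * (2 * (m : ℝ) + 1))))
      atTop
      (𝓝 (∫ p in Set.Ioc (0 : ℝ) 1 ×ˢ Set.Ioc (0 : ℝ) 1,
        RH H p.1 p.2 ^ (2 * m) * (p.1 * p.2) ^ (-(H * (2 * (m : ℝ) + 1))))) := by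
  have hdom : ∀ p ∈ Ioc (0 : ℝ) 1 ×ˢ Ioc (0 : ℝ) 1, ∀ q ∈ Ioc (0 : ℝ) 1 ×ˢ Ioc (0 : ℝ) 1, p ≤ q →
      |RH H q.1 q.2 ^ (2 * m) * (q.1 * q.2) ^ (-(H * (2 * (m : ℝ) + 1)))| ≤
        p.1 ^ (-H) * p.2 ^ (-H) := by
    rintro p ⟨⟨hp₁, -⟩, hp₂, -⟩ q - ⟨hpq₁, hpq₂⟩
    exact_mod_cast abs_RH_pow_mul_rpow_le hH.le hH'.le (2 * m) hp₁ hpq₁ hp₂ hpq₂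
  have hmeas : Measurable fun p : ℝ × ℝ =>
      RH H p.1 p.2 ^ (2 * m) * (p.1 * p.2) ^ (-(H * (2 * (m : ℝ) + 1))) :=
    ((continuous_RH hH).measurable.pow_const _).mul (by fun_prop)
  have hcont : ContinuousOn (fun p : ℝ × ℝ =>
      RH H p.1 p.2 ^ (2 * m) * (p.1 * p.2) ^ (-(H * (2 * (m : ℝ) + 1)))) (Ioo 0 1 ×ˢ Ioo 0 1) :=
    fun p ⟨⟨hp₁, _⟩, hp₂, _⟩ => (((continuous_RH hH).continuousAt.pow _).mul
      ((continuousAt_fst.mul continuousAt_snd).rpow_const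
        (Or.inl (mul_pos hp₁ hp₂).ne'))).continuousWithinAt
  obtain ⟨hint, hlim⟩ := tendsto_riemannSum_unitSquare hmeas hcont
    (integrableOn_rpow_neg_mul_rpow_neg hH') hdom
  refine ⟨hint, hlim.congr fun n => ?_⟩
  congr 1
  refine Finset.sum_congr rfl fun i _ => Finset.sum_congr rfl fun j _ => ?_
  rw [Real.mul_rpow (by positivity) (by positivity), mul_assoc]

theorem statement14 (H : ℝ) (hH : 0 < H) (hH' : H < 1) (m : ℕ) (hm : 1 ≤ m) :
    IntegrableOn
      (fun p : ℝ × ℝ =>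
        RH H p.1 p.2 ^ (2 * m) * (p.1 * p.2) ^ (-(H * (2 * (m : ℝ) + 1))))
      (Set.Ioc 0 1 ×ˢ Set.Ioc 0 1) ∧
    Tendsto (fun n : ℕ =>
        ((n : ℝ) ^ 2)⁻¹ *
          ∑ i ∈ Finset.Ico 1 n, ∑ j ∈ Finset.Ico 1 n,
            RH H ((i : ℝ) / n) ((j : ℝ) / n) ^ (2 * m) *
              ((i : ℝ) / n) ^ (-(H * (2 * (m : ℝ) + 1))) *
              ((j : ℝ) / n) ^ (-(H * (2 * (m : ℝ) + 1))))
      atTop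
      (𝓝 (∫ p in Set.Ioc (0 : ℝ) 1 ×ˢ Set.Ioc (0 : ℝ) 1,
        RH H p.1 p.2 ^ (2 * m) * (p.1 * p.2) ^ (-(H * (2 * (m : ℝ) + 1))))) :=
  statement14_general H hH hH' m
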